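/- Let (Σ,μ) be a σ-finite measure space, 1 ≤ p < ∞, let Ω be an L∞-centralizer on L_p(μ) with centralizer constant C(Ω), and let u_1,…,u_n be pairwise disjointly supported functions in L_p(μ) with linear span E. If there is a linear map L : E → L⁰(μ) with Ω(x) − L(x) ∈ L_p and ‖Ω(x) − L(x)‖_p ≤ C‖x‖_p for all x ∈ E, then there is a linear map L' : E → L⁰(μ) such that supp L'(x) ⊆ supp x a.e. for every x ∈ E, and Ω(x) − L'(x) ∈ L_p with ‖Ω(x) − L'(x)‖_p ≤ (C + C(Ω))‖x‖_p for all x ∈ E. (L' is obtained by averaging v·L(v·x) over the finite group of ±1-valued functions generated by those taking value 1 on supp u_i and −1 elsewhere.) -/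

import Mathlib

open MeasureTheory
open scoped ENNReal

noncomputable section

section L0Defs

variable {α : Type*} [MeasurableSpace α] {μ : Measure α} {q : ℝ≥0∞}

/-- Two elements of `L_p(μ)` are disjointly supported (up to null sets). -/
def DisjSupp (f g : Lp ℝ q μ) : Prop := ∀ᵐ a ∂μ, f a = 0 ∨ g a = 0

/-- `Ω : L_p(μ) → L⁰(μ)` is trivial on a subspace `E`: some (possibly discontinuous) linear
map `L : E → L⁰` satisfies that `Ω - L` takes values in `L_p` on `E` and is bounded there. -/
def L0TrivialOn (Ω : Lp ℝ q μ → (α →ₘ[μ] ℝ)) (E : Submodule ℝ (Lp ℝ q μ)) : Prop :=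
  ∃ (L : E →ₗ[ℝ] (α →ₘ[μ] ℝ)) (C : ℝ), 0 ≤ C ∧ ∀ x : E,
    eLpNorm (⇑(Ω x - L x)) q μ ≤ ENNReal.ofReal (C * ‖(x : Lp ℝ q μ)‖)

/-- `Ω : L_p(μ) → L⁰(μ)` is an `L_∞`-centralizer with constant `C`: it is homogeneous and,
whenever `y = f·x` in `L⁰` with `f ∈ L_∞` and `x ∈ L_p`, the difference `Ω(f x) - f·Ω(x)`
has `L_p`-norm at most `C‖f‖_∞‖x‖_p` (in particular it lies in `L_p`). -/
def IsCentralizerWith (Ω : Lp ℝ q μ → (α →ₘ[μ] ℝ)) (C : ℝ) : Prop :=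
  (∀ (c : ℝ) (x : Lp ℝ q μ), Ω (c • x) = c • Ω x) ∧
    ∀ f : α →ₘ[μ] ℝ, f ∈ Lp ℝ ⊤ μ → ∀ x y : Lp ℝ q μ, (y : α →ₘ[μ] ℝ) = f * ↑x →
      eLpNorm (⇑(Ω y - f * Ω x)) q μ ≤
        ENNReal.ofReal (C * (eLpNorm (⇑f) ⊤ μ).toReal * ‖x‖)

/-- `Ω` is quasi-linear as a map with values in `L⁰` relative to the `L_p` norm. -/
def L0QuasiLinear (Ω : Lp ℝ q μ → (α →ₘ[μ] ℝ)) : Prop :=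
  ∃ Q : ℝ, 0 ≤ Q ∧ ∀ x y : Lp ℝ q μ,
    eLpNorm (⇑(Ω (x + y) - Ω x - Ω y)) q μ ≤ ENNReal.ofReal (Q * (‖x‖ + ‖y‖))

/-- `Ω` is contractive: `supp Ω(x) ⊆ supp x` a.e. -/
def Contractive (Ω : Lp ℝ q μ → (α →ₘ[μ] ℝ)) : Prop :=
  ∀ x : Lp ℝ q μ, ∀ᵐ a ∂μ, x a = 0 → Ω x a = 0

/-- `Ω` is disjointly singular: its restriction to the closed linear span of every sequence
of nonzero pairwise disjointly supported elements is not trivial. -/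
def L0DisjointlySingular [Fact (1 ≤ q)] (Ω : Lp ℝ q μ → (α →ₘ[μ] ℝ)) : Prop :=
  ∀ u : ℕ → Lp ℝ q μ, (∀ n, u n ≠ 0) → Pairwise (fun i j => DisjSupp (u i) (u j)) →
    ¬ L0TrivialOn Ω (Submodule.span ℝ (Set.range u)).topologicalClosure

/-- The average `∇_{[b]}Ω` over all choices of signs of
`‖Ω (∑ ± b_k) - ∑ ± Ω(b_k)‖_p` (computed in `ℝ≥0∞`). -/
def nabla (Ω : Lp ℝ q μ → (α →ₘ[μ] ℝ)) {n : ℕ} (b : Fin n → Lp ℝ q μ) : ℝ≥0∞ :=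
  (2 ^ n : ℝ≥0∞)⁻¹ * ∑ ε : Fin n → Bool,
    eLpNorm (⇑(Ω (∑ k, (if ε k then (1:ℝ) else -1) • b k)
      - ∑ k, (if ε k then (1:ℝ) else -1) • Ω (b k))) q μ

end L0Defs

/-!
Write `x ∈ E` as `∑ c_j(x) u_j` with `c` linear and put `L' x = ∑ c_j(x) 1_{supp u_j} L(u_j)`,
which preserves supports. For signs `ε` let `w_ε` be `ε_j` on `supp u_j` and `1` elsewhere. Then
`w_ε x ∈ E` and, as `w_ε² = 1`,
`|Ω x - w_ε L(w_ε x)| = |(Ω(w_ε x) - L(w_ε x)) - (Ω(w_ε x) - w_ε Ω x)|`,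
whose `L_p`-norm is at most `(C + C(Ω))‖x‖`. Averaging over all `ε` cancels the cross terms,
`avg_ε w_ε L(w_ε x) = L' x`, so the same bound holds for `Ω x - L' x`.
If `C(Ω) < 0` the centralizer is exact, `Ω(f x) = f Ω(x)`, and then `Ω` itself agrees on `E`
with `∑ c_j(x) 1_{supp u_j} Ω(u_j)`.
-/

open Finset

def boolSign (b : Bool) : ℝ := if b then 1 else -1

lemma boolSign_mul_self (b : Bool) : boolSign b * boolSign b = 1 := by
  cases b <;> norm_num [boolSign]

lemma abs_boolSign (b : Bool) : |boolSign b| = 1 := by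
  cases b <;> norm_num [boolSign]

lemma boolSign_not (b : Bool) : boolSign (!b) = -boolSign b := by
  cases b <;> norm_num [boolSign]

section SignSums

variable {ι : Type*} [Fintype ι] [DecidableEq ι]

lemma sum_boolSign_mul_eq_zero (i : ι) (F : (ι → Bool) → ℝ)
    (hF : ∀ ε b, F (Function.update ε i b) = F ε) :
    ∑ ε : ι → Bool, boolSign (ε i) * F ε = 0 := by
  refine sum_ninvolution (fun ε => Function.update ε i (!ε i)) (fun ε => ?_) (fun ε _ h => ?_)
    (fun _ => mem_univ _) (fun ε => by simp)
  · rw [hF, Function.update_self, boolSign_not]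
    ring
  · simpa using congrFun h i

lemma sum_boolSign (j : ι) : ∑ ε : ι → Bool, boolSign (ε j) = 0 := by
  simpa using sum_boolSign_mul_eq_zero j (fun _ => 1) (fun _ _ => rfl)

lemma sum_boolSign_mul_boolSign (i j : ι) :
    ∑ ε : ι → Bool, boolSign (ε i) * boolSign (ε j) = if i = j then 2 ^ Fintype.card ι else 0 := by
  split_ifs with hij
  · simp [hij, boolSign_mul_self]
  · exact sum_boolSign_mul_eq_zero i (fun ε => boolSign (ε j))
      (fun ε b => by rw [Function.update_of_ne (Ne.symm hij)])

end SignSums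

section Pointwise

variable {ι : Type*} [Fintype ι] {v : ι → ℝ}

/-- The value at `a` of the sign function that is `ε j` on `supp u_j` and `1` off all supports,
read off from `v j = u_j a`; as a product it has modulus one even where supports overlap. -/
def signAt (v : ι → ℝ) (ε : ι → Bool) : ℝ := ∏ j, if v j = 0 then 1 else boolSign (ε j)

lemma abs_signAt (v : ι → ℝ) (ε : ι → Bool) : |signAt v ε| = 1 := by
  simp [signAt, abs_prod, apply_ite, abs_boolSign]

lemma eq_zero_or_exists_single_of_subsingleton_support (hv : (Function.support v).Subsingleton) :
    v = 0 ∨ ∃ i, v i ≠ 0 ∧ ∀ j ≠ i, v j = 0 := by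
  by_cases h : v = 0
  · exact .inl h
  obtain ⟨i, hi⟩ := Function.ne_iff.1 h
  exact .inr ⟨i, hi, fun j hji => by_contra fun hj => hji (hv hj hi)⟩

lemma signAt_of_eq_zero_of_ne {i : ι} (hi : v i ≠ 0) (hv : ∀ j ≠ i, v j = 0) (ε : ι → Bool) :
    signAt v ε = boolSign (ε i) := by
  rw [signAt, prod_eq_single i (fun j _ hj => by simp [hv j hj]) (by simp), if_neg hi]

lemma sum_eq_single_of_eq_zero_of_ne {i : ι} (hv : ∀ j ≠ i, v j = 0) (f : ι → ℝ → ℝ)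
    (hf : ∀ j, f j 0 = 0) : ∑ j, f j (v j) = f i (v i) :=
  sum_eq_single i (fun j _ hj => by rw [hv j hj, hf]) (by simp)

lemma sum_mul_indicator_eq_zero (hv : (Function.support v).Subsingleton) (c t : ι → ℝ)
    (h : ∑ j, c j * v j = 0) : ∑ j, c j * ((if v j = 0 then 0 else 1) * t j) = 0 := by
  rcases eq_zero_or_exists_single_of_subsingleton_support hv with rfl | ⟨i, hi, hv⟩
  · simp
  rw [sum_eq_single_of_eq_zero_of_ne hv (fun j r => c j * r) (by simp)] at h
  rw [sum_eq_single_of_eq_zero_of_ne hv (fun j r => c j * ((if r = 0 then 0 else 1) * t j))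
    (by simp), (mul_eq_zero.1 h).resolve_right hi, zero_mul]

lemma sum_boolSign_mul_mul (hv : (Function.support v).Subsingleton) (c : ι → ℝ)
    (ε : ι → Bool) : ∑ j, boolSign (ε j) * c j * v j = signAt v ε * ∑ j, c j * v j := by
  rcases eq_zero_or_exists_single_of_subsingleton_support hv with rfl | ⟨i, hi, hv⟩
  · simp
  rw [signAt_of_eq_zero_of_ne hi hv,
    sum_eq_single_of_eq_zero_of_ne hv (fun j r => boolSign (ε j) * c j * r) (by simp),
    sum_eq_single_of_eq_zero_of_ne hv (fun j r => c j * r) (by simp), mul_assoc]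

lemma sum_signAt_mul_sum_boolSign_mul [DecidableEq ι] (hv : (Function.support v).Subsingleton)
    (c t : ι → ℝ) :
    ∑ ε : ι → Bool, signAt v ε * ∑ j, boolSign (ε j) * c j * t j =
      2 ^ Fintype.card ι * ∑ j, c j * ((if v j = 0 then 0 else 1) * t j) := by
  rcases eq_zero_or_exists_single_of_subsingleton_support hv with rfl | ⟨i, hi, hv⟩
  · simp only [signAt, Pi.zero_apply, if_true, prod_const_one, one_mul, mul_zero, zero_mul,
      sum_const_zero]
    rw [sum_comm]
    simp [mul_assoc, ← sum_mul, sum_boolSign]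
  have hsigns : ∀ j, ∑ ε : ι → Bool, boolSign (ε i) * (boolSign (ε j) * c j * t j) =
      (if i = j then 2 ^ Fintype.card ι else 0) * (c j * t j) := fun j => by
    rw [← sum_boolSign_mul_boolSign, sum_mul]
    exact sum_congr rfl fun _ _ => by ring
  rw [sum_eq_single_of_eq_zero_of_ne hv (fun j r => c j * ((if r = 0 then 0 else 1) * t j))
    (by simp), if_neg hi]
  simp only [signAt_of_eq_zero_of_ne hi hv, mul_sum]
  rw [sum_comm, sum_congr rfl fun j _ => hsigns j]
  simp

lemma mul_eq_ite_mul_sum (hv : (Function.support v).Subsingleton) (c : ι → ℝ) (i : ι) :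
    c i * v i = (if v i = 0 then 0 else 1) * ∑ j, c j * v j := by
  by_cases hi : v i = 0
  · simp [hi]
  rw [if_neg hi, one_mul, sum_eq_single_of_eq_zero_of_ne
    (fun j hj => by_contra fun h => hj (hv h hi)) (fun j r => c j * r) (by simp)]

lemma eq_sum_mul_ite_mul (hv : (Function.support v).Subsingleton) (c t : ι → ℝ) {o : ℝ}
    (ho : (if ∑ j, c j * v j = 0 then 0 else 1) * o = o)
    (hoi : ∀ i, (if v i = 0 then 0 else 1) * o = c i * t i) :
    o = ∑ j, c j * ((if v j = 0 then 0 else 1) * t j) := by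
  rcases eq_zero_or_exists_single_of_subsingleton_support hv with rfl | ⟨i, hi, hv⟩
  · simpa using ho.symm
  rw [sum_eq_single_of_eq_zero_of_ne hv (fun j r => c j * ((if r = 0 then 0 else 1) * t j))
    (by simp), if_neg hi, one_mul, ← hoi i, if_neg hi, one_mul]

end Pointwise

section L0

variable {α : Type*} [MeasurableSpace α] {μ : Measure α} {q : ℝ≥0∞}

lemma MeasureTheory.AEEqFun.coeFn_sum_smul {ι : Type*} (s : Finset ι) (r : ι → ℝ)
    (f : ι → α →ₘ[μ] ℝ) :
    ⇑(∑ j ∈ s, r j • f j) =ᵐ[μ] fun a => ∑ j ∈ s, r j * f j a := by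
  classical
  induction s using Finset.induction_on with
  | empty => simpa [Pi.zero_def] using AEEqFun.coeFn_zero (μ := μ) (β := ℝ)
  | insert i s hi ih =>
    simp only [sum_insert hi]
    filter_upwards [AEEqFun.coeFn_add (r i • f i) (∑ j ∈ s, r j • f j),
      AEEqFun.coeFn_smul (r i) (f i), ih] with a h₁ h₂ h₃
    simp [h₁, h₂, h₃]

lemma MeasureTheory.Lp.coeFn_sum_smul {ι : Type*} (s : Finset ι) (r : ι → ℝ)
    (f : ι → Lp ℝ q μ) :
    ⇑(∑ j ∈ s, r j • f j) =ᵐ[μ] fun a => ∑ j ∈ s, r j * f j a := by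
  have : ((∑ j ∈ s, r j • f j : Lp ℝ q μ) : α →ₘ[μ] ℝ) = ∑ j ∈ s, r j • (f j : α →ₘ[μ] ℝ) :=
    map_sum (Lp.LpSubmodule ℝ ℝ q μ).subtype _ _
  change ⇑((∑ j ∈ s, r j • f j : Lp ℝ q μ) : α →ₘ[μ] ℝ) =ᵐ[μ] _
  rw [this]
  exact AEEqFun.coeFn_sum_smul s r _

lemma mem_Lp_top_of_ae_abs_le_one {W : α →ₘ[μ] ℝ} (hW : ∀ᵐ a ∂μ, |W a| ≤ 1) :
    W ∈ Lp ℝ ∞ μ :=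
  Lp.mem_Lp_iff_memLp.2 (memLp_top_of_bound W.aestronglyMeasurable 1 hW)

lemma eLpNorm_top_le_one_of_ae_abs_le_one {W : α →ₘ[μ] ℝ} (hW : ∀ᵐ a ∂μ, |W a| ≤ 1) :
    eLpNorm W ∞ μ ≤ 1 := by
  simpa [eLpNorm_exponent_top] using eLpNormEssSup_le_of_ae_bound (f := ⇑W) (C := 1) hW

lemma MeasureTheory.Lp.norm_eq_of_coe_eq_mul {W : α →ₘ[μ] ℝ} (hW : ∀ᵐ a ∂μ, |W a| = 1)
    {x y : Lp ℝ q μ} (hy : (y : α →ₘ[μ] ℝ) = W * x) : ‖y‖ = ‖x‖ := by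
  rw [Lp.norm_def, Lp.norm_def]
  congr 1
  refine eLpNorm_congr_norm_ae ?_
  filter_upwards [hy ▸ AEEqFun.coeFn_mul W (x : α →ₘ[μ] ℝ), hW] with a hya ha
  simp [hya, ha]

lemma eLpNorm_le_of_ae_eq_average {E : Type*} [NormedAddCommGroup E] [NormedSpace ℝ E]
    {κ : Type*} [Fintype κ] {f : α → E} {g : κ → α → E} (hg : ∀ k, AEStronglyMeasurable (g k) μ)
    (hq : 1 ≤ q) {B : ℝ≥0∞} (hf : f =ᵐ[μ] (Fintype.card κ : ℝ)⁻¹ • ∑ k, g k)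
    (hB : ∀ k, eLpNorm (g k) q μ ≤ B) : eLpNorm f q μ ≤ B := by
  rw [eLpNorm_congr_ae hf, eLpNorm_const_smul]
  calc ‖(Fintype.card κ : ℝ)⁻¹‖ₑ * eLpNorm (∑ k, g k) q μ
      ≤ ‖(Fintype.card κ : ℝ)⁻¹‖ₑ * ∑ k, eLpNorm (g k) q μ := by
        gcongr; exact eLpNorm_sum_le (fun k _ => hg k) hq
    _ ≤ ‖(Fintype.card κ : ℝ)⁻¹‖ₑ * (Fintype.card κ * B) := by
        gcongr; simpa using sum_le_sum fun k (_ : k ∈ univ) => hB k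
    _ ≤ B := by
        rcases eq_or_ne (Fintype.card κ) 0 with h | h
        · simp [h]
        · rw [← mul_assoc, enorm_inv (by exact_mod_cast h)]
          simp [ENNReal.inv_mul_cancel (by exact_mod_cast h) (ENNReal.natCast_ne_top _)]

end L0

section Centralizer

variable {α : Type*} [MeasurableSpace α] {μ : Measure α} {q : ℝ≥0∞} [Fact (1 ≤ q)]
  {Ω : Lp ℝ q μ → (α →ₘ[μ] ℝ)} {CΩ : ℝ}

theorem IsCentralizerWith.eLpNorm_sub_mul_le (hcen : IsCentralizerWith Ω CΩ) (hCΩ : 0 ≤ CΩ)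
    {W : α →ₘ[μ] ℝ} (hW : ∀ᵐ a ∂μ, |W a| = 1) {x y : Lp ℝ q μ}
    (hy : (y : α →ₘ[μ] ℝ) = W * x) {g : α →ₘ[μ] ℝ} {C : ℝ} (hC : 0 ≤ C)
    (hg : eLpNorm ⇑(Ω y - g) q μ ≤ ENNReal.ofReal (C * ‖y‖)) :
    eLpNorm ⇑(Ω x - W * g) q μ ≤ ENNReal.ofReal ((C + CΩ) * ‖x‖) := by
  have hW_le : ∀ᵐ a ∂μ, |W a| ≤ 1 := hW.mono fun _ h => h.le
  have hcomm : eLpNorm ⇑(Ω y - W * Ω x) q μ ≤ ENNReal.ofReal (CΩ * ‖x‖) := by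
    refine (hcen.2 W (mem_Lp_top_of_ae_abs_le_one hW_le) x y hy).trans
      (ENNReal.ofReal_le_ofReal ?_)
    have hWnorm : (eLpNorm W ∞ μ).toReal ≤ 1 := by
      simpa using ENNReal.toReal_mono ENNReal.one_ne_top (eLpNorm_top_le_one_of_ae_abs_le_one hW_le)
    simpa using mul_le_mul_of_nonneg_right (mul_le_mul_of_nonneg_left hWnorm hCΩ) (norm_nonneg x)
  -- since `W² = 1`, `|Ω x - W g| = |W Ω x - g| = |(Ω y - g) - (Ω y - W Ω x)|`
  have hsplit : eLpNorm ⇑(Ω x - W * g) q μ = eLpNorm (⇑(Ω y - g) - ⇑(Ω y - W * Ω x)) q μ := by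
    refine eLpNorm_congr_norm_ae ?_
    filter_upwards [AEEqFun.coeFn_sub (Ω x) (W * g), AEEqFun.coeFn_mul W g,
      AEEqFun.coeFn_sub (Ω y) g, AEEqFun.coeFn_sub (Ω y) (W * Ω x), AEEqFun.coeFn_mul W (Ω x),
      hW] with a h₁ h₂ h₃ h₄ h₅ ha
    have hsq : W a * W a = 1 := by rw [← abs_mul_abs_self, ha, one_mul]
    simp only [h₁, h₂, h₃, h₄, h₅, Pi.sub_apply, Pi.mul_apply, Real.norm_eq_abs]
    rw [show Ω x a - W a * g a = W a * (W a * Ω x a - g a) by linear_combination (-Ω x a) * hsq,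
      abs_mul, ha, one_mul]
    ring_nf
  calc eLpNorm ⇑(Ω x - W * g) q μ
      ≤ eLpNorm ⇑(Ω y - g) q μ + eLpNorm ⇑(Ω y - W * Ω x) q μ :=
        hsplit ▸ eLpNorm_sub_le (AEEqFun.aestronglyMeasurable _) (AEEqFun.aestronglyMeasurable _)
          Fact.out
    _ ≤ ENNReal.ofReal (C * ‖x‖) + ENNReal.ofReal (CΩ * ‖x‖) := by
        rw [Lp.norm_eq_of_coe_eq_mul hW hy] at hg
        gcongr
    _ = ENNReal.ofReal ((C + CΩ) * ‖x‖) := by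
        rw [← ENNReal.ofReal_add (by positivity) (by positivity), add_mul]

theorem IsCentralizerWith.map_eq_mul_of_nonpos (hcen : IsCentralizerWith Ω CΩ) (hCΩ : CΩ ≤ 0)
    {f : α →ₘ[μ] ℝ} (hf : f ∈ Lp ℝ ∞ μ) {x y : Lp ℝ q μ} (hy : (y : α →ₘ[μ] ℝ) = f * x) :
    Ω y = f * Ω x := by
  have hq : q ≠ 0 := (zero_lt_one.trans_le Fact.out).ne'
  have hzero : eLpNorm ⇑(Ω y - f * Ω x) q μ = 0 := by
    refine le_antisymm ((hcen.2 f hf x y hy).trans_eq (ENNReal.ofReal_eq_zero.2 ?_)) zero_le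
    exact mul_nonpos_of_nonpos_of_nonneg
      (mul_nonpos_of_nonpos_of_nonneg hCΩ ENNReal.toReal_nonneg) (norm_nonneg x)
  rw [← sub_eq_zero]
  exact AEEqFun.ext (((eLpNorm_eq_zero_iff (AEEqFun.aestronglyMeasurable _) hq).1 hzero).trans
    AEEqFun.coeFn_zero.symm)

end Centralizer

section SupportsAndSigns

variable {α : Type*} [MeasurableSpace α] {μ : Measure α}

def supportIndicator (f : α →ₘ[μ] ℝ) : α →ₘ[μ] ℝ :=
  AEEqFun.mk (fun a => if f a = 0 then 0 else 1)
    (Measurable.ite (f.measurable (measurableSet_singleton 0)) measurable_const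
      measurable_const).aestronglyMeasurable

lemma coeFn_supportIndicator (f : α →ₘ[μ] ℝ) :
    ⇑(supportIndicator f) =ᵐ[μ] fun a => if f a = 0 then 0 else 1 :=
  AEEqFun.coeFn_mk _ _

lemma supportIndicator_mem_Lp_top (f : α →ₘ[μ] ℝ) : supportIndicator f ∈ Lp ℝ ∞ μ :=
  mem_Lp_top_of_ae_abs_le_one <| (coeFn_supportIndicator f).mono fun a h => by
    simp only [h]; split_ifs <;> simp

lemma supportIndicator_mul_self (f : α →ₘ[μ] ℝ) : supportIndicator f * f = f :=
  AEEqFun.ext <| by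
    filter_upwards [AEEqFun.coeFn_mul (supportIndicator f) f, coeFn_supportIndicator f]
      with a h₁ h₂
    rw [h₁, Pi.mul_apply, h₂]
    split_ifs with h <;> simp [h]

variable {ι : Type*} [Fintype ι]

def signPattern (u : ι → α →ₘ[μ] ℝ) (ε : ι → Bool) : α →ₘ[μ] ℝ :=
  AEEqFun.mk (fun a => signAt (fun j => u j a) ε)
    (Finset.measurable_prod _ fun j _ => Measurable.ite
      ((u j).measurable (measurableSet_singleton 0)) measurable_const
        measurable_const).aestronglyMeasurable

lemma coeFn_signPattern (u : ι → α →ₘ[μ] ℝ) (ε : ι → Bool) :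
    ⇑(signPattern u ε) =ᵐ[μ] fun a => signAt (fun j => u j a) ε :=
  AEEqFun.coeFn_mk _ _

lemma abs_signPattern (u : ι → α →ₘ[μ] ℝ) (ε : ι → Bool) : ∀ᵐ a ∂μ, |signPattern u ε a| = 1 :=
  (coeFn_signPattern u ε).mono fun a h => by rw [h, abs_signAt]

end SupportsAndSigns

theorem Submodule.exists_linearMap_sum_smul_eq {K V ι : Type*} [Field K] [AddCommGroup V]
    [Module K V] [Fintype ι] (v : ι → V) :
    ∃ c : span K (Set.range v) →ₗ[K] ι → K, ∀ x, ∑ i, c x i • v i = x := by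
  let e : ι → span K (Set.range v) := fun i => ⟨v i, subset_span (Set.mem_range_self i)⟩
  have hsurj : LinearMap.range (Fintype.linearCombination K e) = ⊤ := by
    refine LinearMap.range_eq_top.2 fun x => ?_
    obtain ⟨c, hc⟩ := mem_span_range_iff_exists_fun K |>.1 x.2
    exact ⟨c, Subtype.ext <| by simpa [Fintype.linearCombination_apply, e] using hc⟩
  obtain ⟨c, hc⟩ := (Fintype.linearCombination K e).exists_rightInverse_of_surjective hsurj
  refine ⟨c, fun x => ?_⟩
  simpa [Fintype.linearCombination_apply, e] using congrArg Subtype.val (LinearMap.congr_fun hc x)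

section Span

open Submodule

variable {α : Type*} [MeasurableSpace α] {μ : Measure α} {q : ℝ≥0∞}
  {ι : Type*} [Fintype ι] (u : ι → Lp ℝ q μ)

def spanVec (j : ι) : span ℝ (Set.range u) := ⟨u j, subset_span (Set.mem_range_self j)⟩

def onSupports (c : span ℝ (Set.range u) →ₗ[ℝ] ι → ℝ) (g : ι → α →ₘ[μ] ℝ) :
    span ℝ (Set.range u) →ₗ[ℝ] α →ₘ[μ] ℝ :=
  ∑ j, (LinearMap.proj j ∘ₗ c).smulRight (supportIndicator (u j : α →ₘ[μ] ℝ) * g j)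

def flipSigns (c : span ℝ (Set.range u) →ₗ[ℝ] ι → ℝ) (ε : ι → Bool)
    (x : span ℝ (Set.range u)) : span ℝ (Set.range u) :=
  ∑ j, (boolSign (ε j) * c x j) • spanVec u j

variable {u} {c : span ℝ (Set.range u) →ₗ[ℝ] ι → ℝ}

lemma coeFn_onSupports (g : ι → α →ₘ[μ] ℝ) (x : span ℝ (Set.range u)) :
    ⇑(onSupports u c g x) =ᵐ[μ] fun a => ∑ j, c x j * ((if u j a = 0 then 0 else 1) * g j a) := by
  have hsum : onSupports u c g x = ∑ j, c x j • (supportIndicator (u j : α →ₘ[μ] ℝ) * g j) := by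
    simp [onSupports]
  have hterms : ∀ᵐ a ∂μ, ∀ j, (supportIndicator (u j : α →ₘ[μ] ℝ) * g j) a =
      (if u j a = 0 then 0 else 1) * g j a := by
    refine ae_all_iff.2 fun j => ?_
    filter_upwards [AEEqFun.coeFn_mul (supportIndicator (u j : α →ₘ[μ] ℝ)) (g j),
      coeFn_supportIndicator (u j : α →ₘ[μ] ℝ)] with a h₁ h₂
    rw [h₁, Pi.mul_apply, h₂]
  filter_upwards [hsum ▸ AEEqFun.coeFn_sum_smul univ (c x) _, hterms] with a h₁ h₂
  simp only [h₁, h₂]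

lemma ae_subsingleton_support (hdisj : Pairwise fun i j => DisjSupp (u i) (u j)) :
    ∀ᵐ a ∂μ, (Function.support fun j => u j a).Subsingleton := by
  have h : ∀ᵐ a ∂μ, ∀ i j, i ≠ j → u i a = 0 ∨ u j a = 0 := by
    refine ae_all_iff.2 fun i => ae_all_iff.2 fun j => ?_
    by_cases hij : i = j
    · exact .of_forall fun _ h => absurd hij h
    · exact (hdisj hij).mono fun _ h _ => h
  filter_upwards [h] with a ha i hi j hj
  by_contra hij
  exact (ha i j hij).elim hi hj

lemma coeFn_eq_sum_of_sum_smul_eq (hc : ∀ x, ∑ j, c x j • u j = (x : Lp ℝ q μ))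
    (x : span ℝ (Set.range u)) :
    ⇑(x : Lp ℝ q μ) =ᵐ[μ] fun a => ∑ j, c x j * u j a :=
  hc x ▸ Lp.coeFn_sum_smul univ (c x) u

theorem ae_onSupports_eq_zero_of_eq_zero (hdisj : Pairwise fun i j => DisjSupp (u i) (u j))
    (hc : ∀ x, ∑ j, c x j • u j = (x : Lp ℝ q μ)) (g : ι → α →ₘ[μ] ℝ)
    (x : span ℝ (Set.range u)) : ∀ᵐ a ∂μ, (x : Lp ℝ q μ) a = 0 → onSupports u c g x a = 0 := by
  filter_upwards [ae_subsingleton_support hdisj, coeFn_eq_sum_of_sum_smul_eq hc x,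
    coeFn_onSupports g x] with a hv hx hL h0
  rw [hL]
  exact sum_mul_indicator_eq_zero hv _ _ (hx ▸ h0)

lemma coe_flipSigns (hdisj : Pairwise fun i j => DisjSupp (u i) (u j))
    (hc : ∀ x, ∑ j, c x j • u j = (x : Lp ℝ q μ)) (ε : ι → Bool) (x : span ℝ (Set.range u)) :
    ((flipSigns u c ε x : Lp ℝ q μ) : α →ₘ[μ] ℝ) =
      signPattern (fun j => (u j : α →ₘ[μ] ℝ)) ε * ((x : Lp ℝ q μ) : α →ₘ[μ] ℝ) := by
  have hcoe : (flipSigns u c ε x : Lp ℝ q μ) = ∑ j, (boolSign (ε j) * c x j) • u j := by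
    simp [flipSigns, spanVec]
  refine AEEqFun.ext ?_
  filter_upwards [hcoe ▸ Lp.coeFn_sum_smul univ _ u, AEEqFun.coeFn_mul (signPattern _ ε) _,
    coeFn_signPattern _ ε, coeFn_eq_sum_of_sum_smul_eq hc x, ae_subsingleton_support hdisj]
    with a h₁ h₂ h₃ h₄ hv
  change ⇑(flipSigns u c ε x : Lp ℝ q μ) a = _
  rw [h₁, h₂, Pi.mul_apply, h₃, show ((x : Lp ℝ q μ) : α →ₘ[μ] ℝ) a = _ from h₄]
  exact sum_boolSign_mul_mul hv (c x) ε

lemma coeFn_sub_onSupports_ae_eq_average [DecidableEq ι]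
    (hdisj : Pairwise fun i j => DisjSupp (u i) (u j))
    (L : span ℝ (Set.range u) →ₗ[ℝ] α →ₘ[μ] ℝ) (h : α →ₘ[μ] ℝ) (x : span ℝ (Set.range u)) :
    ⇑(h - onSupports u c (fun j => L (spanVec u j)) x) =ᵐ[μ]
      (Fintype.card (ι → Bool) : ℝ)⁻¹ • ∑ ε : ι → Bool,
        ⇑(h - signPattern (fun j => (u j : α →ₘ[μ] ℝ)) ε * L (flipSigns u c ε x)) := by
  have hflip : ∀ᵐ a ∂μ, ∀ ε : ι → Bool,
      (h - signPattern (fun j => (u j : α →ₘ[μ] ℝ)) ε * L (flipSigns u c ε x)) a =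
        h a - signAt (fun j => u j a) ε * ∑ j, boolSign (ε j) * c x j * L (spanVec u j) a := by
    refine ae_all_iff.2 fun ε => ?_
    have hL : L (flipSigns u c ε x) = ∑ j, (boolSign (ε j) * c x j) • L (spanVec u j) := by
      simp [flipSigns]
    filter_upwards [AEEqFun.coeFn_sub h (signPattern _ ε * L (flipSigns u c ε x)),
      AEEqFun.coeFn_mul (signPattern _ ε) (L (flipSigns u c ε x)), coeFn_signPattern _ ε,
      hL ▸ AEEqFun.coeFn_sum_smul univ _ _] with a h₁ h₂ h₃ h₄
    rw [h₁, Pi.sub_apply, h₂, Pi.mul_apply, h₃, h₄]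
  filter_upwards [AEEqFun.coeFn_sub h (onSupports u c (fun j => L (spanVec u j)) x),
    coeFn_onSupports (c := c) (fun j => L (spanVec u j)) x, hflip, ae_subsingleton_support hdisj]
    with a h₁ h₂ h₃ hv
  simp only [h₁, Pi.sub_apply, h₂, Pi.smul_apply, Finset.sum_apply, h₃, smul_eq_mul]
  rw [sum_sub_distrib, sum_signAt_mul_sum_boolSign_mul hv, sum_const, card_univ, nsmul_eq_mul,
    Fintype.card_fun, Fintype.card_bool]
  push_cast
  field_simp

theorem IsCentralizerWith.eLpNorm_sub_onSupports_le [Fact (1 ≤ q)] [DecidableEq ι]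
    {Ω : Lp ℝ q μ → (α →ₘ[μ] ℝ)} {CΩ : ℝ} (hcen : IsCentralizerWith Ω CΩ) (hCΩ : 0 ≤ CΩ)
    (hdisj : Pairwise fun i j => DisjSupp (u i) (u j))
    (hc : ∀ x, ∑ j, c x j • u j = (x : Lp ℝ q μ)) {C : ℝ} (hC : 0 ≤ C)
    {L : span ℝ (Set.range u) →ₗ[ℝ] α →ₘ[μ] ℝ}
    (hL : ∀ x : span ℝ (Set.range u),
      eLpNorm ⇑(Ω x - L x) q μ ≤ ENNReal.ofReal (C * ‖(x : Lp ℝ q μ)‖))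
    (x : span ℝ (Set.range u)) :
    eLpNorm ⇑(Ω x - onSupports u c (fun j => L (spanVec u j)) x) q μ ≤
      ENNReal.ofReal ((C + CΩ) * ‖(x : Lp ℝ q μ)‖) :=
  eLpNorm_le_of_ae_eq_average (fun _ => AEEqFun.aestronglyMeasurable _) Fact.out
    (coeFn_sub_onSupports_ae_eq_average hdisj L (Ω x) x) fun ε =>
      hcen.eLpNorm_sub_mul_le hCΩ (abs_signPattern _ ε) (coe_flipSigns hdisj hc ε x) hC (hL _)

lemma coe_smul_eq_supportIndicator_mul (hdisj : Pairwise fun i j => DisjSupp (u i) (u j))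
    (hc : ∀ x, ∑ j, c x j • u j = (x : Lp ℝ q μ)) (x : span ℝ (Set.range u)) (i : ι) :
    ((c x i • u i : Lp ℝ q μ) : α →ₘ[μ] ℝ) =
      supportIndicator (u i : α →ₘ[μ] ℝ) * ((x : Lp ℝ q μ) : α →ₘ[μ] ℝ) := by
  refine AEEqFun.ext ?_
  filter_upwards [Lp.coeFn_smul (c x i) (u i), AEEqFun.coeFn_mul (supportIndicator _) _,
    coeFn_supportIndicator (u i : α →ₘ[μ] ℝ), coeFn_eq_sum_of_sum_smul_eq hc x,
    ae_subsingleton_support hdisj] with a h₁ h₂ h₃ h₄ hv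
  change ⇑(c x i • u i) a = _
  rw [h₁, h₂, Pi.mul_apply, h₃, show ((x : Lp ℝ q μ) : α →ₘ[μ] ℝ) a = _ from h₄]
  exact mul_eq_ite_mul_sum hv (c x) i

theorem IsCentralizerWith.eq_onSupports_of_nonpos [Fact (1 ≤ q)]
    {Ω : Lp ℝ q μ → (α →ₘ[μ] ℝ)} {CΩ : ℝ} (hcen : IsCentralizerWith Ω CΩ) (hCΩ : CΩ ≤ 0)
    (hdisj : Pairwise fun i j => DisjSupp (u i) (u j))
    (hc : ∀ x, ∑ j, c x j • u j = (x : Lp ℝ q μ)) (x : span ℝ (Set.range u)) :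
    Ω x = onSupports u c (fun j => Ω (u j)) x := by
  have hx : Ω x = supportIndicator ((x : Lp ℝ q μ) : α →ₘ[μ] ℝ) * Ω x :=
    hcen.map_eq_mul_of_nonpos hCΩ (supportIndicator_mem_Lp_top _)
      (supportIndicator_mul_self _).symm
  have hblocks : ∀ i, c x i • Ω (u i) = supportIndicator (u i : α →ₘ[μ] ℝ) * Ω x := fun i => by
    rw [← hcen.1]
    exact hcen.map_eq_mul_of_nonpos hCΩ (supportIndicator_mem_Lp_top _)
      (coe_smul_eq_supportIndicator_mul hdisj hc x i)
  have hblocks_ae : ∀ᵐ a ∂μ, ∀ i, (if u i a = 0 then 0 else 1) * Ω x a = c x i * Ω (u i) a := by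
    refine ae_all_iff.2 fun i => ?_
    filter_upwards [AEEqFun.coeFn_smul (c x i) (Ω (u i)), hblocks i ▸ AEEqFun.coeFn_mul _ _,
      coeFn_supportIndicator (u i : α →ₘ[μ] ℝ)] with a h₁ h₂ h₃
    rw [← h₃, ← Pi.mul_apply, ← h₂, h₁, Pi.smul_apply, smul_eq_mul]
  have hx_ae : ∀ᵐ a ∂μ, (if (x : Lp ℝ q μ) a = 0 then 0 else 1) * Ω x a = Ω x a := by
    filter_upwards [AEEqFun.coeFn_mul (supportIndicator ((x : Lp ℝ q μ) : α →ₘ[μ] ℝ)) (Ω x),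
      coeFn_supportIndicator ((x : Lp ℝ q μ) : α →ₘ[μ] ℝ)] with a h₁ h₂
    rw [← h₂, ← Pi.mul_apply, ← h₁, ← hx]
  refine AEEqFun.ext ?_
  filter_upwards [hx_ae, coeFn_eq_sum_of_sum_smul_eq hc x, hblocks_ae,
    coeFn_onSupports (c := c) (fun j => Ω (u j)) x, ae_subsingleton_support hdisj]
    with a h₁ h₂ h₃ h₄ hv
  rw [h₄]
  exact eq_sum_mul_ite_mul hv (c x) _ (h₂ ▸ h₁) h₃

end Span

theorem exists_support_preserving_linear_map_general
    {α : Type*} [MeasurableSpace α] {μ : Measure α}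
    {q : ℝ≥0∞} [Fact (1 ≤ q)]
    (Ω : Lp ℝ q μ → (α →ₘ[μ] ℝ)) (CΩ : ℝ)
    (hcen : IsCentralizerWith Ω CΩ)
    (n : ℕ) (u : Fin n → Lp ℝ q μ)
    (hdisj : Pairwise (fun i j => DisjSupp (u i) (u j)))
    (C : ℝ) (hC : 0 ≤ C)
    (L : (Submodule.span ℝ (Set.range u)) →ₗ[ℝ] (α →ₘ[μ] ℝ))
    (hL : ∀ x : Submodule.span ℝ (Set.range u),
      eLpNorm (⇑(Ω x - L x)) q μ ≤ ENNReal.ofReal (C * ‖(x : Lp ℝ q μ)‖)) :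
    ∃ L' : (Submodule.span ℝ (Set.range u)) →ₗ[ℝ] (α →ₘ[μ] ℝ),
      (∀ x : Submodule.span ℝ (Set.range u), ∀ᵐ a ∂μ,
        (x : Lp ℝ q μ) a = 0 → (L' x) a = 0) ∧
      ∀ x : Submodule.span ℝ (Set.range u),
        eLpNorm (⇑(Ω x - L' x)) q μ ≤ ENNReal.ofReal ((C + CΩ) * ‖(x : Lp ℝ q μ)‖) := by
  obtain ⟨c, hc⟩ := Submodule.exists_linearMap_sum_smul_eq (K := ℝ) u
  rcases le_or_gt 0 CΩ with hCΩ | hCΩ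
  · exact ⟨onSupports u c fun j => L (spanVec u j), ae_onSupports_eq_zero_of_eq_zero hdisj hc _,
      hcen.eLpNorm_sub_onSupports_le hCΩ hdisj hc hC hL⟩
  · refine ⟨onSupports u c fun j => Ω (u j), ae_onSupports_eq_zero_of_eq_zero hdisj hc _,
      fun x => ?_⟩
    rw [← hcen.eq_onSupports_of_nonpos hCΩ.le hdisj hc x, sub_self,
      eLpNorm_congr_ae AEEqFun.coeFn_zero, eLpNorm_zero]
    exact zero_le

/-- If an `L_∞`-centralizer `Ω` on `L_p(μ)` with constant `CΩ` is
`C`-trivial on the span `E` of finitely many disjointly supported functions via a linear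
map `L`, then it is `(C + CΩ)`-trivial on `E` via a support-preserving linear map. -/
theorem exists_support_preserving_linear_map
    {α : Type*} [MeasurableSpace α] {μ : Measure α} [SigmaFinite μ]
    {q : ℝ≥0∞} [Fact (1 ≤ q)] (hq : q ≠ ∞)
    (Ω : Lp ℝ q μ → (α →ₘ[μ] ℝ)) (CΩ : ℝ)
    (hcen : IsCentralizerWith Ω CΩ)
    (n : ℕ) (u : Fin n → Lp ℝ q μ)
    (hdisj : Pairwise (fun i j => DisjSupp (u i) (u j)))
    (C : ℝ) (hC : 0 ≤ C)
    (L : (Submodule.span ℝ (Set.range u)) →ₗ[ℝ] (α →ₘ[μ] ℝ))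
    (hL : ∀ x : Submodule.span ℝ (Set.range u),
      eLpNorm (⇑(Ω x - L x)) q μ ≤ ENNReal.ofReal (C * ‖(x : Lp ℝ q μ)‖)) :
    ∃ L' : (Submodule.span ℝ (Set.range u)) →ₗ[ℝ] (α →ₘ[μ] ℝ),
      (∀ x : Submodule.span ℝ (Set.range u), ∀ᵐ a ∂μ,
        (x : Lp ℝ q μ) a = 0 → (L' x) a = 0) ∧
      ∀ x : Submodule.span ℝ (Set.range u),
        eLpNorm (⇑(Ω x - L' x)) q μ ≤ ENNReal.ofReal ((C + CΩ) * ‖(x : Lp ℝ q μ)‖) :=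
  exists_support_preserving_linear_map_general Ω CΩ hcen n u hdisj C hC L hL
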